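/- arXiv:1905.13357 — 4 statements merged into one kernel-verified Lean document; each statement's English description precedes it below -/
import Mathlib

section
/- There exists an optimal oblivious policy: for every nonempty finite state space S, nonempty finite action space A, transition kernel p, reward function r with values in [0,1], discount factor γ ∈ [0,1) and horizon τ, there exists a policy π* : S → ℕ → A such that V_{π*} l s ≥ V_π l s for every policy π : S → ℕ → A, every time index l ≤ τ, and every state s ∈ S. -/
/-!
Backward induction. Let `U k` be the optimal value with `k` steps to go, computed by the
Bellman recursion `U (k + 1) s = max_a ∑ s', p s a s' * (r s a s' + γ * U k s')`. Because the
one-step backup is monotone in the continuation value, every policy has `V π l ≤ U (τ - l)`,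
while the policy choosing a maximizing action at each time attains `U (τ - l)` exactly.
-/

open Finset

noncomputable section

namespace FiniteHorizonMDP

variable {S A : Type*} [Fintype S] (p : S → A → S → ℝ) (r : S → A → S → ℝ) (γ : ℝ)

def backup (W : S → ℝ) (s : S) (a : A) : ℝ :=
  ∑ s', p s a s' * (r s a s' + γ * W s')

theorem backup_mono (hp : ∀ s a s', 0 ≤ p s a s') (hγ : 0 ≤ γ) {W W' : S → ℝ} (hW : W ≤ W')
    (s : S) (a : A) : backup p r γ W s a ≤ backup p r γ W' s a :=
  sum_le_sum fun s' _ => mul_le_mul_of_nonneg_left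
    (add_le_add_right (mul_le_mul_of_nonneg_left (hW s') hγ) _) (hp s a s')

variable [Fintype A] [Nonempty A]

/-- The optimal value with `k` steps to go. -/
def optValue : ℕ → S → ℝ
  | 0 => 0
  | k + 1 => fun s => univ.sup' univ_nonempty (backup p r γ (optValue k) s)

theorem backup_le_optValue_succ (k : ℕ) (s : S) (a : A) :
    backup p r γ (optValue p r γ k) s a ≤ optValue p r γ (k + 1) s :=
  le_sup' _ (mem_univ a)

theorem exists_backup_eq_optValue_succ (k : ℕ) (s : S) :
    ∃ a, backup p r γ (optValue p r γ k) s a = optValue p r γ (k + 1) s := by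
  obtain ⟨a, -, ha⟩ := exists_mem_eq_sup' univ_nonempty (backup p r γ (optValue p r γ k) s)
  exact ⟨a, ha.symm⟩

/-- At time `l` of horizon `τ` there are `τ - (l + 1)` steps to go after the current one. -/
def greedyPolicy (τ : ℕ) (s : S) (l : ℕ) : A :=
  (exists_backup_eq_optValue_succ p r γ (τ - (l + 1)) s).choose

theorem backup_greedyPolicy (τ : ℕ) (s : S) (l : ℕ) :
    backup p r γ (optValue p r γ (τ - (l + 1))) s (greedyPolicy p r γ τ s l) =
      optValue p r γ (τ - (l + 1) + 1) s :=
  (exists_backup_eq_optValue_succ p r γ (τ - (l + 1)) s).choose_spec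

variable {p r γ} {τ : ℕ} {V : (S → ℕ → A) → ℕ → S → ℝ}
  (hV_ge : ∀ π l s, τ ≤ l → V π l s = 0)
  (hV_lt : ∀ π l s, l < τ → V π l s = backup p r γ (V π (l + 1)) s (π s l))
include hV_ge hV_lt

theorem value_greedyPolicy (l : ℕ) :
    V (greedyPolicy p r γ τ) l = optValue p r γ (τ - l) := by
  induction hk : τ - l generalizing l with
  | zero => funext s; exact hV_ge _ _ _ (by omega)
  | succ k ih =>
    have hk' : τ - (l + 1) = k := by omega
    funext s
    have hspec := backup_greedyPolicy p r γ τ s l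
    rw [hk'] at hspec
    rw [hV_lt _ _ _ (by omega), ih (l + 1) hk', hspec]

theorem value_le_optValue (hp : ∀ s a s', 0 ≤ p s a s') (hγ : 0 ≤ γ) (π : S → ℕ → A) (l : ℕ) :
    V π l ≤ optValue p r γ (τ - l) := by
  induction hk : τ - l generalizing l with
  | zero => intro s; exact (hV_ge _ _ _ (by omega)).le
  | succ k ih =>
    intro s
    rw [hV_lt _ _ _ (by omega)]
    exact (backup_mono p r γ hp hγ (ih (l + 1) (by omega)) s (π s l)).trans
      (backup_le_optValue_succ p r γ k s (π s l))

end FiniteHorizonMDP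

end

theorem exists_optimal_oblivious_policy_general
    {S A : Type*} [Fintype S] [Fintype A] [Nonempty A]
    (p : S → A → S → ℝ)
    (hp_nonneg : ∀ s a s', 0 ≤ p s a s')
    (r : S → A → S → ℝ)
    (γ : ℝ) (hγ0 : 0 ≤ γ) (τ : ℕ)
    (V : (S → ℕ → A) → ℕ → S → ℝ)
    (hV_ge : ∀ (π : S → ℕ → A) (l : ℕ) (s : S), τ ≤ l → V π l s = 0)
    (hV_lt : ∀ (π : S → ℕ → A) (l : ℕ) (s : S), l < τ →
      V π l s = ∑ s', p s (π s l) s' * (r s (π s l) s' + γ * V π (l + 1) s')) :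
    ∃ πstar : S → ℕ → A, ∀ (π : S → ℕ → A) (l : ℕ), l ≤ τ → ∀ s : S,
      V πstar l s ≥ V π l s := by
  refine ⟨FiniteHorizonMDP.greedyPolicy p r γ τ, fun π l _ s => ?_⟩
  rw [FiniteHorizonMDP.value_greedyPolicy hV_ge hV_lt]
  exact FiniteHorizonMDP.value_le_optValue hV_ge hV_lt hp_nonneg hγ0 π l s

/-- There exists an optimal oblivious policy: for every nonempty finite state space `S`,
nonempty finite action space `A`, transition kernel `p`, reward function `r` with values in
`[0,1]`, discount factor `γ ∈ [0,1)` and horizon `τ`, there exists a policy `π* : S → ℕ → A`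
such that `V π* l s ≥ V π l s` for every policy `π`, every `l ≤ τ`, and every state `s`. -/
theorem exists_optimal_oblivious_policy
    {S A : Type*} [Fintype S] [Nonempty S] [Fintype A] [Nonempty A]
    (p : S → A → S → ℝ)
    (hp_nonneg : ∀ s a s', 0 ≤ p s a s')
    (hp_sum : ∀ s a, ∑ s', p s a s' = 1)
    (r : S → A → S → ℝ)
    (hr : ∀ s a s', 0 ≤ r s a s' ∧ r s a s' ≤ 1)
    (γ : ℝ) (hγ0 : 0 ≤ γ) (hγ1 : γ < 1) (τ : ℕ)
    (V : (S → ℕ → A) → ℕ → S → ℝ)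
    (hV_ge : ∀ (π : S → ℕ → A) (l : ℕ) (s : S), τ ≤ l → V π l s = 0)
    (hV_lt : ∀ (π : S → ℕ → A) (l : ℕ) (s : S), l < τ →
      V π l s = ∑ s', p s (π s l) s' * (r s (π s l) s' + γ * V π (l + 1) s')) :
    ∃ πstar : S → ℕ → A, ∀ (π : S → ℕ → A) (l : ℕ), l ≤ τ → ∀ s : S,
      V πstar l s ≥ V π l s :=
  exists_optimal_oblivious_policy_general p hp_nonneg r γ hγ0 τ V hV_ge hV_lt
end

section
/- Any policy that is greedy with respect to the backward-induction optimal Q-function is optimal: if a policy π satisfies, for every state s and every l < τ, that π s l maximizes a ↦ Q l s a over A, then for every l ≤ τ and every state s, V_π l s = max_{a ∈ A} Q l s a (for l < τ) and V_π l s ≥ V_{π'} l s for every policy π'. -/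
/-!
Backward induction on the stage `l`, from the horizon down. The one-step backup
`W ↦ ∑ p (r + γ W)` is monotone because `p ≥ 0` and `γ ≥ 0`, so feeding it the bound
`V π' (l+1) ≤ max Q (l+1)` gives `V π' l ≤ Q l s (π' s l) ≤ max Q l`; for the greedy policy the
two inequalities become equalities.
-/

open Finset

section BackwardInduction

variable {S A : Type*}

noncomputable def expectedReturn [Fintype S] (p r : S → A → S → ℝ) (γ : ℝ) (s : S) (a : A)
    (W : S → ℝ) : ℝ :=
  ∑ s', p s a s' * (r s a s' + γ * W s')

theorem expectedReturn_mono [Fintype S] {p : S → A → S → ℝ} (hp : ∀ s a s', 0 ≤ p s a s')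
    (r : S → A → S → ℝ) {γ : ℝ} (hγ : 0 ≤ γ) (s : S) (a : A) :
    Monotone (expectedReturn p r γ s a) := fun _ _ hW =>
  sum_le_sum fun s' _ => mul_le_mul_of_nonneg_left (by gcongr; exact hW s') (hp s a s')

variable [Fintype S] [Fintype A] [Nonempty A] {p r : S → A → S → ℝ} {γ : ℝ} {τ : ℕ}
  {V : (S → ℕ → A) → ℕ → S → ℝ} {Q : ℕ → S → A → ℝ}

theorem value_le_sup'_optimalQ (hp : ∀ s a s', 0 ≤ p s a s') (hγ : 0 ≤ γ)
    (hV_ge : ∀ (π : S → ℕ → A) (l : ℕ) (s : S), τ ≤ l → V π l s = 0)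
    (hV_lt : ∀ (π : S → ℕ → A) (l : ℕ) (s : S), l < τ →
      V π l s = expectedReturn p r γ s (π s l) (V π (l + 1)))
    (hQ_ge : ∀ (l : ℕ) (s : S) (a : A), τ ≤ l → Q l s a = 0)
    (hQ_lt : ∀ (l : ℕ) (s : S) (a : A), l < τ →
      Q l s a = expectedReturn p r γ s a (fun s' => univ.sup' univ_nonempty (Q (l + 1) s')))
    (π : S → ℕ → A) {l : ℕ} (hl : l ≤ τ) (s : S) :
    V π l s ≤ univ.sup' univ_nonempty (Q l s) := by
  induction hl using Nat.decreasingInduction generalizing s with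
  | self => rw [hV_ge π τ s le_rfl, sup'_eq_of_forall _ _ fun a _ => hQ_ge τ s a le_rfl]
  | of_succ l hl ih =>
    calc V π l s = expectedReturn p r γ s (π s l) (V π (l + 1)) := hV_lt π l s hl
      _ ≤ Q l s (π s l) := (hQ_lt l s _ hl).symm ▸ expectedReturn_mono hp r hγ s _ ih
      _ ≤ univ.sup' univ_nonempty (Q l s) := le_sup' _ (mem_univ _)

theorem greedy_value_eq_sup'_optimalQ
    (hV_ge : ∀ (π : S → ℕ → A) (l : ℕ) (s : S), τ ≤ l → V π l s = 0)
    (hV_lt : ∀ (π : S → ℕ → A) (l : ℕ) (s : S), l < τ →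
      V π l s = expectedReturn p r γ s (π s l) (V π (l + 1)))
    (hQ_ge : ∀ (l : ℕ) (s : S) (a : A), τ ≤ l → Q l s a = 0)
    (hQ_lt : ∀ (l : ℕ) (s : S) (a : A), l < τ →
      Q l s a = expectedReturn p r γ s a (fun s' => univ.sup' univ_nonempty (Q (l + 1) s')))
    {π : S → ℕ → A} (hgreedy : ∀ (s : S) (l : ℕ), l < τ → ∀ a : A, Q l s a ≤ Q l s (π s l))
    {l : ℕ} (hl : l ≤ τ) (s : S) :
    V π l s = univ.sup' univ_nonempty (Q l s) := by
  induction hl using Nat.decreasingInduction generalizing s with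
  | self => rw [hV_ge π τ s le_rfl, sup'_eq_of_forall _ _ fun a _ => hQ_ge τ s a le_rfl]
  | of_succ l hl ih =>
    calc V π l s = expectedReturn p r γ s (π s l) (V π (l + 1)) := hV_lt π l s hl
      _ = Q l s (π s l) := by rw [funext ih, hQ_lt l s _ hl]
      _ = univ.sup' univ_nonempty (Q l s) :=
        le_antisymm (le_sup' _ (mem_univ _)) (sup'_le _ _ fun a _ => hgreedy s l hl a)

end BackwardInduction

theorem greedy_policy_is_optimal_general
    {S A : Type*} [Fintype S] [Fintype A] [Nonempty A]
    (p : S → A → S → ℝ)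
    (hp_nonneg : ∀ s a s', 0 ≤ p s a s')
    (r : S → A → S → ℝ)
    (γ : ℝ) (hγ0 : 0 ≤ γ) (τ : ℕ)
    (V : (S → ℕ → A) → ℕ → S → ℝ)
    (hV_ge : ∀ (π : S → ℕ → A) (l : ℕ) (s : S), τ ≤ l → V π l s = 0)
    (hV_lt : ∀ (π : S → ℕ → A) (l : ℕ) (s : S), l < τ →
      V π l s = ∑ s', p s (π s l) s' * (r s (π s l) s' + γ * V π (l + 1) s'))
    (Q : ℕ → S → A → ℝ)
    (hQ_ge : ∀ (l : ℕ) (s : S) (a : A), τ ≤ l → Q l s a = 0)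
    (hQ_lt : ∀ (l : ℕ) (s : S) (a : A), l < τ →
      Q l s a = ∑ s', p s a s' *
        (r s a s' + γ * Finset.univ.sup' Finset.univ_nonempty (fun a' => Q (l + 1) s' a')))
    (π : S → ℕ → A)
    (hgreedy : ∀ (s : S) (l : ℕ), l < τ → ∀ a : A, Q l s a ≤ Q l s (π s l)) :
    ∀ l : ℕ, l ≤ τ → ∀ s : S,
      (l < τ → V π l s = Finset.univ.sup' Finset.univ_nonempty (fun a => Q l s a)) ∧
      (∀ π' : S → ℕ → A, V π l s ≥ V π' l s) := by
  intro l hl s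
  have hπ := greedy_value_eq_sup'_optimalQ hV_ge hV_lt hQ_ge hQ_lt hgreedy hl s
  exact ⟨fun _ => hπ, fun π' =>
    hπ ▸ value_le_sup'_optimalQ hp_nonneg hγ0 hV_ge hV_lt hQ_ge hQ_lt π' hl s⟩

/-- Any policy that is greedy with respect to the backward-induction optimal Q-function is
optimal: if `π s l` maximizes `a ↦ Q l s a` over `A` for every state `s` and every `l < τ`,
then for every `l ≤ τ` and every state `s`, `V π l s = max_{a ∈ A} Q l s a` (for `l < τ`) and
`V π l s ≥ V π' l s` for every policy `π'`. -/
theorem greedy_policy_is_optimal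
    {S A : Type*} [Fintype S] [Nonempty S] [Fintype A] [Nonempty A]
    (p : S → A → S → ℝ)
    (hp_nonneg : ∀ s a s', 0 ≤ p s a s')
    (hp_sum : ∀ s a, ∑ s', p s a s' = 1)
    (r : S → A → S → ℝ)
    (hr : ∀ s a s', 0 ≤ r s a s' ∧ r s a s' ≤ 1)
    (γ : ℝ) (hγ0 : 0 ≤ γ) (hγ1 : γ < 1) (τ : ℕ)
    (V : (S → ℕ → A) → ℕ → S → ℝ)
    (hV_ge : ∀ (π : S → ℕ → A) (l : ℕ) (s : S), τ ≤ l → V π l s = 0)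
    (hV_lt : ∀ (π : S → ℕ → A) (l : ℕ) (s : S), l < τ →
      V π l s = ∑ s', p s (π s l) s' * (r s (π s l) s' + γ * V π (l + 1) s'))
    (Q : ℕ → S → A → ℝ)
    (hQ_ge : ∀ (l : ℕ) (s : S) (a : A), τ ≤ l → Q l s a = 0)
    (hQ_lt : ∀ (l : ℕ) (s : S) (a : A), l < τ →
      Q l s a = ∑ s', p s a s' *
        (r s a s' + γ * Finset.univ.sup' Finset.univ_nonempty (fun a' => Q (l + 1) s' a')))
    (π : S → ℕ → A)
    (hgreedy : ∀ (s : S) (l : ℕ), l < τ → ∀ a : A, Q l s a ≤ Q l s (π s l)) :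
    ∀ l : ℕ, l ≤ τ → ∀ s : S,
      (l < τ → V π l s = Finset.univ.sup' Finset.univ_nonempty (fun a => Q l s a)) ∧
      (∀ π' : S → ℕ → A, V π l s ≥ V π' l s) :=
  greedy_policy_is_optimal_general p hp_nonneg r γ hγ0 τ V hV_ge hV_lt Q hQ_ge hQ_lt π hgreedy
end

section
/- The recursively defined value function equals the expected discounted cumulative reward over trajectories: for every policy π, every l < τ, and every state s, V_π l s = Σ over all trajectories σ : {0,1,…,τ−l} → S with σ 0 = s of [ (Π_{j=0}^{τ−l−1} p (σ j) (π (σ j) (l+j)) (σ (j+1))) * (Σ_{j=0}^{τ−l−1} γ^j * r (σ j) (π (σ j) (l+j)) (σ (j+1))) ]. -/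
section Aux

variable {S A : Type*} [Fintype S] [DecidableEq S]

/-- probability of a trajectory -/
private def Pr (p : S → A → S → ℝ) (π : S → ℕ → A) (n l : ℕ) (σ : Fin (n+1) → S) : ℝ :=
  ∏ j : Fin n, p (σ j.castSucc) (π (σ j.castSucc) (l + (j : ℕ))) (σ j.succ)

/-- discounted reward of a trajectory -/
private def Rw (r : S → A → S → ℝ) (π : S → ℕ → A) (γ : ℝ) (n l : ℕ) (σ : Fin (n+1) → S) : ℝ :=
  ∑ j : Fin n, γ ^ (j : ℕ) * r (σ j.castSucc) (π (σ j.castSucc) (l + (j : ℕ))) (σ j.succ)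

private lemma Pr_cons (p : S → A → S → ℝ) (π : S → ℕ → A) (n l : ℕ) (s : S)
    (g : Fin (n+1) → S) :
    Pr p π (n+1) l (Fin.cons s g) = p s (π s l) (g 0) * Pr p π n (l+1) g := by
  unfold Pr
  rw [Fin.prod_univ_succ]
  congr 1
  refine Finset.prod_congr rfl fun j _ => ?_
  have h1 : (Fin.cons s g : Fin (n+2) → S) (j.succ).castSucc = g j.castSucc := by
    rw [← Fin.succ_castSucc, Fin.cons_succ]
  have h2 : (Fin.cons s g : Fin (n+2) → S) (j.succ).succ = g j.succ := by
    rw [Fin.cons_succ]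
  rw [h1, h2]
  have hv : ((j.succ : Fin (n+1)) : ℕ) = (j : ℕ) + 1 := Fin.val_succ j
  have harg : l + ((j.succ : Fin (n+1)) : ℕ) = l + 1 + (j : ℕ) := by omega
  rw [harg]

private lemma Rw_cons (r : S → A → S → ℝ) (π : S → ℕ → A) (γ : ℝ) (n l : ℕ) (s : S)
    (g : Fin (n+1) → S) :
    Rw r π γ (n+1) l (Fin.cons s g) = r s (π s l) (g 0) + γ * Rw r π γ n (l+1) g := by
  unfold Rw
  rw [Fin.sum_univ_succ, Finset.mul_sum]
  congr 1
  · simp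
  · refine Finset.sum_congr rfl fun j _ => ?_
    have h1 : (Fin.cons s g : Fin (n+2) → S) (j.succ).castSucc = g j.castSucc := by
      rw [← Fin.succ_castSucc, Fin.cons_succ]
    have h2 : (Fin.cons s g : Fin (n+2) → S) (j.succ).succ = g j.succ := by
      rw [Fin.cons_succ]
    rw [h1, h2]
    have hv : ((j.succ : Fin (n+1)) : ℕ) = (j : ℕ) + 1 := Fin.val_succ j
    have harg : l + ((j.succ : Fin (n+1)) : ℕ) = l + 1 + (j : ℕ) := by omega
    rw [harg, hv]
    ring

/-- split a sum over trajectories starting at `s` -/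
private lemma sum_cons_eq (n : ℕ) (s : S) (F : (Fin (n+1) → S) → ℝ) :
    ∑ σ ∈ Finset.univ.filter (fun σ : Fin (n+1) → S => σ 0 = s), F σ
      = ∑ g : Fin n → S, F (Fin.cons s g) := by
  rw [Finset.sum_filter]
  rw [← Equiv.sum_comp (Fin.consEquiv (fun _ : Fin (n+1) => S))]
  rw [Fintype.sum_prod_type]
  have : ∀ x : S, ∀ g : Fin n → S,
      (Fin.consEquiv (fun _ : Fin (n+1) => S)) (x, g) = Fin.cons x g := fun _ _ => rfl
  simp only [this, Fin.cons_zero]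
  rw [Finset.sum_eq_single s]
  · simp
  · intro b _ hb
    simp [hb]
  · simp

private lemma Pr_sum_one (p : S → A → S → ℝ) (π : S → ℕ → A)
    (hp_sum : ∀ s a, ∑ s', p s a s' = 1) :
    ∀ (n l : ℕ) (s : S), ∑ g : Fin n → S, Pr p π n l (Fin.cons s g) = 1 := by
  intro n
  induction n with
  | zero => intro l s; simp [Pr]
  | succ n ih =>
    intro l s
    rw [← Equiv.sum_comp (Fin.consEquiv (fun _ : Fin (n+1) => S))]
    have hc : ∀ x : S, ∀ g : Fin n → S,
        (Fin.consEquiv (fun _ : Fin (n+1) => S)) (x, g) = Fin.cons x g := fun _ _ => rfl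
    rw [Fintype.sum_prod_type]
    have : ∀ x : S, ∑ g : Fin n → S,
        Pr p π (n+1) l (Fin.cons s ((Fin.consEquiv (fun _ : Fin (n+1) => S)) (x, g)))
          = p s (π s l) x := by
      intro x
      simp only [hc]
      have : ∀ g : Fin n → S,
          Pr p π (n+1) l (Fin.cons s (Fin.cons x g))
            = p s (π s l) x * Pr p π n (l+1) (Fin.cons x g) := by
        intro g
        rw [Pr_cons]
        simp
      simp only [this, ← Finset.mul_sum, ih (l+1) x, mul_one]
    simp only [this, hp_sum]

end Aux

/-- The recursively defined value function equals the expected discounted cumulative reward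
over trajectories: for every policy `π`, every `l < τ`, and every state `s`,
`V π l s` equals the sum over all trajectories `σ : Fin (τ - l + 1) → S` with `σ 0 = s` of
the probability of the trajectory times its discounted cumulative reward. -/
theorem value_eq_expected_discounted_reward
    {S A : Type*} [Fintype S] [Nonempty S] [DecidableEq S] [Fintype A] [Nonempty A]
    (p : S → A → S → ℝ)
    (hp_nonneg : ∀ s a s', 0 ≤ p s a s')
    (hp_sum : ∀ s a, ∑ s', p s a s' = 1)
    (r : S → A → S → ℝ)
    (hr : ∀ s a s', 0 ≤ r s a s' ∧ r s a s' ≤ 1)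
    (γ : ℝ) (hγ0 : 0 ≤ γ) (hγ1 : γ < 1) (τ : ℕ)
    (V : (S → ℕ → A) → ℕ → S → ℝ)
    (hV_ge : ∀ (π : S → ℕ → A) (l : ℕ) (s : S), τ ≤ l → V π l s = 0)
    (hV_lt : ∀ (π : S → ℕ → A) (l : ℕ) (s : S), l < τ →
      V π l s = ∑ s', p s (π s l) s' * (r s (π s l) s' + γ * V π (l + 1) s')) :
    ∀ (π : S → ℕ → A) (l : ℕ), l < τ → ∀ s : S,
      V π l s =
        ∑ σ ∈ Finset.univ.filter (fun σ : Fin (τ - l + 1) → S => σ 0 = s),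
          (∏ j : Fin (τ - l),
              p (σ j.castSucc) (π (σ j.castSucc) (l + (j : ℕ))) (σ j.succ)) *
          (∑ j : Fin (τ - l),
              γ ^ (j : ℕ) * r (σ j.castSucc) (π (σ j.castSucc) (l + (j : ℕ))) (σ j.succ)) := by
  intro π
  -- main induction
  have main : ∀ (n l : ℕ), l + (n + 1) = τ → ∀ s : S,
      V π l s = ∑ g : Fin (n+1) → S,
        Pr p π (n+1) l (Fin.cons s g) * Rw r π γ (n+1) l (Fin.cons s g) := by
    intro n
    induction n with
    | zero =>
      intro l hl s
      rw [hV_lt π l s (by omega)]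
      rw [← Equiv.sum_comp (Equiv.funUnique (Fin 1) S).symm]
      refine Finset.sum_congr rfl fun s' _ => ?_
      have hg : ((Equiv.funUnique (Fin 1) S).symm s' : Fin 1 → S) = fun _ => s' := rfl
      rw [hg, Pr_cons, Rw_cons]
      have hV0 : V π (l+1) s' = 0 := hV_ge π (l+1) s' (by omega)
      simp [Pr, Rw, hV0]
    | succ n ih =>
      intro l hl s
      rw [hV_lt π l s (by omega)]
      rw [← Equiv.sum_comp (Fin.consEquiv (fun _ : Fin (n+2) => S))]
      have hc : ∀ x : S, ∀ g : Fin (n+1) → S,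
          (Fin.consEquiv (fun _ : Fin (n+2) => S)) (x, g) = Fin.cons x g := fun _ _ => rfl
      rw [Fintype.sum_prod_type]
      refine Finset.sum_congr rfl fun s' _ => ?_
      have hexp : ∀ g : Fin (n+1) → S,
          Pr p π (n+2) l (Fin.cons s ((Fin.consEquiv (fun _ : Fin (n+2) => S)) (s', g)))
            * Rw r π γ (n+2) l (Fin.cons s ((Fin.consEquiv (fun _ : Fin (n+2) => S)) (s', g)))
          = p s (π s l) s' * Pr p π (n+1) (l+1) (Fin.cons s' g)
            * (r s (π s l) s' + γ * Rw r π γ (n+1) (l+1) (Fin.cons s' g)) := by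
        intro g
        rw [hc, Pr_cons, Rw_cons]
        simp
      simp only [hexp]
      rw [ih (l+1) (by omega) s']
      have hone := Pr_sum_one p π hp_sum (n+1) (l+1) s'
      symm
      calc ∑ g : Fin (n+1) → S,
              p s (π s l) s' * Pr p π (n+1) (l+1) (Fin.cons s' g)
                * (r s (π s l) s' + γ * Rw r π γ (n+1) (l+1) (Fin.cons s' g))
          = ∑ g : Fin (n+1) → S,
              ((p s (π s l) s' * r s (π s l) s') * Pr p π (n+1) (l+1) (Fin.cons s' g)
                + (p s (π s l) s' * γ) *
                  (Pr p π (n+1) (l+1) (Fin.cons s' g) * Rw r π γ (n+1) (l+1) (Fin.cons s' g))) := by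
            refine Finset.sum_congr rfl fun g _ => ?_; ring
        _ = (p s (π s l) s' * r s (π s l) s') *
              (∑ g : Fin (n+1) → S, Pr p π (n+1) (l+1) (Fin.cons s' g))
            + (p s (π s l) s' * γ) *
              (∑ g : Fin (n+1) → S,
                Pr p π (n+1) (l+1) (Fin.cons s' g) * Rw r π γ (n+1) (l+1) (Fin.cons s' g)) := by
            rw [Finset.sum_add_distrib, ← Finset.mul_sum, ← Finset.mul_sum]
        _ = p s (π s l) s' * (r s (π s l) s' +
              γ * ∑ g : Fin (n+1) → S,
                Pr p π (n+1) (l+1) (Fin.cons s' g) * Rw r π γ (n+1) (l+1) (Fin.cons s' g)) := by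
            rw [hone]; ring
  intro l hl s
  obtain ⟨n, hn⟩ : ∃ n, l + (n + 1) = τ := ⟨τ - l - 1, by omega⟩
  have hτl : τ - l = n + 1 := by omega
  rw [main n l hn s]
  rw [hτl]
  rw [sum_cons_eq (n+1) s]
  rfl
end

section
/- The backward-induction optimal Q-function dominates the Q-function of every policy: for every policy π, every l < τ, every state s, and every action a, Q_π l s a ≤ Q l s a, where Q_π l s a = Σ_{s'} p s a s' * (r s a s' + γ * V_π (l+1) s'); moreover there exists a policy π* with Q_{π*} l s a = Q l s a for all l < τ, s, a. -/
/-!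
By backward induction on `l`, the value of every policy is bounded by `max_a Q l · a`, with
equality for the policy that acts greedily with respect to `Q`. Since `Q_π` and `Q` are the same
one-step Bellman backup applied to `V π (l+1)` and to `max_a Q (l+1) · a`, and the backup is
monotone, both claims follow.
-/

open Finset

theorem backward_induction (τ : ℕ) {P : ℕ → Prop} (of_le : ∀ l, τ ≤ l → P l)
    (of_succ : ∀ l < τ, P (l + 1) → P l) (l : ℕ) : P l := by
  rcases le_or_gt τ l with hl | hl
  · exact of_le l hl
  · exact Nat.decreasingInduction (motive := fun l _ => P l) of_succ (of_le τ le_rfl) hl.le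

section Greedy

variable {S A : Type*} [Fintype A] [Nonempty A]

def supQ (Q : ℕ → S → A → ℝ) (l : ℕ) (s : S) : ℝ :=
  univ.sup' univ_nonempty (Q l s)

theorem le_supQ (Q : ℕ → S → A → ℝ) (l : ℕ) (s : S) (a : A) : Q l s a ≤ supQ Q l s :=
  le_sup' _ (mem_univ a)

noncomputable def greedy (Q : ℕ → S → A → ℝ) : S → ℕ → A :=
  fun s l => (Finite.exists_max (Q l s)).choose

theorem apply_greedy (Q : ℕ → S → A → ℝ) (l : ℕ) (s : S) :
    Q l s (greedy Q s l) = supQ Q l s :=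
  (le_supQ Q l s _).antisymm <| sup'_le _ _ fun a _ => (Finite.exists_max (Q l s)).choose_spec a

end Greedy

section MDP

variable {S A : Type*} [Fintype S]

def bellman (p r : S → A → S → ℝ) (γ : ℝ) (v : S → ℝ) (s : S) (a : A) : ℝ :=
  ∑ s', p s a s' * (r s a s' + γ * v s')

theorem bellman_monotone {p : S → A → S → ℝ} (hp : ∀ s a s', 0 ≤ p s a s')
    (r : S → A → S → ℝ) {γ : ℝ} (hγ : 0 ≤ γ) : Monotone (bellman p r γ) :=
  fun _ _ hvw s a => sum_le_sum fun s' _ =>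
    mul_le_mul_of_nonneg_left (by gcongr; exact hvw s') (hp s a s')

def IsPolicyValue (p r : S → A → S → ℝ) (γ : ℝ) (τ : ℕ) (π : S → ℕ → A) (v : ℕ → S → ℝ) :
    Prop :=
  (∀ l s, τ ≤ l → v l s = 0) ∧
    ∀ l s, l < τ → v l s = bellman p r γ (v (l + 1)) s (π s l)

variable [Fintype A] [Nonempty A]

def IsOptimalQ (p r : S → A → S → ℝ) (γ : ℝ) (τ : ℕ) (Q : ℕ → S → A → ℝ) : Prop :=
  (∀ l s a, τ ≤ l → Q l s a = 0) ∧
    ∀ l s a, l < τ → Q l s a = bellman p r γ (supQ Q (l + 1)) s a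

variable {p r : S → A → S → ℝ} {γ : ℝ} {τ : ℕ} {Q : ℕ → S → A → ℝ}

theorem IsOptimalQ.supQ_eq_zero (hQ : IsOptimalQ p r γ τ Q) {l : ℕ} (hl : τ ≤ l) (s : S) :
    supQ Q l s = 0 := by
  simp only [supQ, funext (hQ.1 l s · hl), sup'_const]

theorem IsPolicyValue.le_supQ {π : S → ℕ → A} {v : ℕ → S → ℝ} (hv : IsPolicyValue p r γ τ π v)
    (hQ : IsOptimalQ p r γ τ Q) (hp : ∀ s a s', 0 ≤ p s a s') (hγ : 0 ≤ γ) :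
    ∀ l s, v l s ≤ supQ Q l s := by
  refine backward_induction τ (fun l hl s => ?_) fun l hl ih s => ?_
  · rw [hv.1 l s hl, hQ.supQ_eq_zero hl]
  · calc v l s = bellman p r γ (v (l + 1)) s (π s l) := hv.2 l s hl
      _ ≤ bellman p r γ (supQ Q (l + 1)) s (π s l) := bellman_monotone hp r hγ ih s (π s l)
      _ = Q l s (π s l) := (hQ.2 l s (π s l) hl).symm
      _ ≤ supQ Q l s := _root_.le_supQ Q l s (π s l)

theorem IsPolicyValue.eq_supQ_of_greedy {v : ℕ → S → ℝ}
    (hv : IsPolicyValue p r γ τ (greedy Q) v) (hQ : IsOptimalQ p r γ τ Q) : v = supQ Q := by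
  refine funext <| backward_induction τ (fun l hl => funext fun s => ?_) fun l hl ih => ?_
  · rw [hv.1 l s hl, hQ.supQ_eq_zero hl]
  · funext s
    rw [hv.2 l s hl, ih, ← hQ.2 l s _ hl, apply_greedy Q]

end MDP

theorem optimal_Q_dominates_general
    {S A : Type*} [Fintype S] [Fintype A] [Nonempty A]
    (p : S → A → S → ℝ)
    (hp_nonneg : ∀ s a s', 0 ≤ p s a s')
    (r : S → A → S → ℝ)
    (γ : ℝ) (hγ0 : 0 ≤ γ) (τ : ℕ)
    (V : (S → ℕ → A) → ℕ → S → ℝ)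
    (hV_ge : ∀ (π : S → ℕ → A) (l : ℕ) (s : S), τ ≤ l → V π l s = 0)
    (hV_lt : ∀ (π : S → ℕ → A) (l : ℕ) (s : S), l < τ →
      V π l s = ∑ s', p s (π s l) s' * (r s (π s l) s' + γ * V π (l + 1) s'))
    (Q : ℕ → S → A → ℝ)
    (hQ_ge : ∀ (l : ℕ) (s : S) (a : A), τ ≤ l → Q l s a = 0)
    (hQ_lt : ∀ (l : ℕ) (s : S) (a : A), l < τ →
      Q l s a = ∑ s', p s a s' *
        (r s a s' + γ * Finset.univ.sup' Finset.univ_nonempty (fun a' => Q (l + 1) s' a')))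
    (Qpol : (S → ℕ → A) → ℕ → S → A → ℝ)
    (hQpol : ∀ (π : S → ℕ → A) (l : ℕ) (s : S) (a : A), l < τ →
      Qpol π l s a = ∑ s', p s a s' * (r s a s' + γ * V π (l + 1) s')) :
    (∀ (π : S → ℕ → A) (l : ℕ) (s : S) (a : A), l < τ → Qpol π l s a ≤ Q l s a) ∧
    (∃ πstar : S → ℕ → A, ∀ (l : ℕ) (s : S) (a : A), l < τ →
      Qpol πstar l s a = Q l s a) := by
  have hQ : IsOptimalQ p r γ τ Q := ⟨hQ_ge, hQ_lt⟩
  have hV (π : S → ℕ → A) : IsPolicyValue p r γ τ π (V π) := ⟨hV_ge π, hV_lt π⟩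
  refine ⟨fun π l s a hl => ?_, greedy Q, fun l s a hl => ?_⟩
  · rw [hQpol π l s a hl, hQ.2 l s a hl]
    exact bellman_monotone hp_nonneg r hγ0 ((hV π).le_supQ hQ hp_nonneg hγ0 (l + 1)) s a
  · rw [hQpol _ l s a hl, hQ.2 l s a hl, (hV _).eq_supQ_of_greedy hQ]
    rfl

/-- The backward-induction optimal Q-function dominates the Q-function of every policy:
for every policy `π`, every `l < τ`, every state `s`, and every action `a`,
`Q_π l s a ≤ Q l s a`, where `Q_π l s a = Σ_{s'} p s a s' * (r s a s' + γ * V π (l+1) s')`;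
moreover there exists a policy `π*` with `Q_{π*} l s a = Q l s a` for all `l < τ`, `s`, `a`. -/
theorem optimal_Q_dominates
    {S A : Type*} [Fintype S] [Nonempty S] [Fintype A] [Nonempty A]
    (p : S → A → S → ℝ)
    (hp_nonneg : ∀ s a s', 0 ≤ p s a s')
    (hp_sum : ∀ s a, ∑ s', p s a s' = 1)
    (r : S → A → S → ℝ)
    (hr : ∀ s a s', 0 ≤ r s a s' ∧ r s a s' ≤ 1)
    (γ : ℝ) (hγ0 : 0 ≤ γ) (hγ1 : γ < 1) (τ : ℕ)
    (V : (S → ℕ → A) → ℕ → S → ℝ)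
    (hV_ge : ∀ (π : S → ℕ → A) (l : ℕ) (s : S), τ ≤ l → V π l s = 0)
    (hV_lt : ∀ (π : S → ℕ → A) (l : ℕ) (s : S), l < τ →
      V π l s = ∑ s', p s (π s l) s' * (r s (π s l) s' + γ * V π (l + 1) s'))
    (Q : ℕ → S → A → ℝ)
    (hQ_ge : ∀ (l : ℕ) (s : S) (a : A), τ ≤ l → Q l s a = 0)
    (hQ_lt : ∀ (l : ℕ) (s : S) (a : A), l < τ →
      Q l s a = ∑ s', p s a s' *
        (r s a s' + γ * Finset.univ.sup' Finset.univ_nonempty (fun a' => Q (l + 1) s' a')))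
    (Qpol : (S → ℕ → A) → ℕ → S → A → ℝ)
    (hQpol : ∀ (π : S → ℕ → A) (l : ℕ) (s : S) (a : A), l < τ →
      Qpol π l s a = ∑ s', p s a s' * (r s a s' + γ * V π (l + 1) s')) :
    (∀ (π : S → ℕ → A) (l : ℕ) (s : S) (a : A), l < τ → Qpol π l s a ≤ Q l s a) ∧
    (∃ πstar : S → ℕ → A, ∀ (l : ℕ) (s : S) (a : A), l < τ →
      Qpol πstar l s a = Q l s a) :=
  optimal_Q_dominates_general p hp_nonneg r γ hγ0 τ V hV_ge hV_lt Q hQ_ge hQ_lt Qpol hQpol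
end
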